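/- Let d ≥ 1. There exists a countable family of open balls B_j = B_{r_j}(z_j) in ℂ^d (identified with ℝ^{2d}) with centers z_j and radii r_j such that: (1) the complement of the closed ball of radius 4 centered at 0 is contained in the union of the B_j; (2) |z_j| ≥ 4 and r_j ≤ 1/|z_j| for every j; and (3) there is a finite bound M such that every point of ℂ^d lies in at most M of the enlarged balls B_{4r_j}(z_j). -/

import Mathlib

/-!
Take a maximal subset `S` of `{‖x‖ ≥ 4}` that is separated at the variable scale `1/‖x‖`, i.e.
`min (1/‖x‖) (1/‖y‖) ≤ dist x y` for distinct `x, y ∈ S` (Zorn). By maximality the balls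
`B(x, 1/‖x‖)`, `x ∈ S`, cover `{‖w‖ > 4}`. The centers of the enlarged balls through a point `w`
have norm `‖w‖ ± 1`, so with `δ = 1/(‖w‖ + 1)` they are `δ`-separated and lie within `6δ` of `w`;
in finite dimension the number of such points is bounded independently of `δ` (rescale to `δ = 1`
and pack a fixed compact ball). The same packing bound makes `S` locally finite, hence countable,
and `S` is infinite because it comes within `1` of points of arbitrarily large norm, so it can be
enumerated by `ℕ`.
-/

open Metric Set

theorem Set.exists_maximal_pairwise_subset {α : Type*} {r : α → α → Prop} [Std.Symm r]
    (A : Set α) : ∃ S ⊆ A, S.Pairwise r ∧ ∀ w ∈ A, w ∉ S → ∃ x ∈ S, ¬ r w x := by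
  obtain ⟨S, ⟨hSA, hS⟩, hmax⟩ := zorn_subset {S | S ⊆ A ∧ S.Pairwise r} fun c hc hchain =>
    ⟨⋃₀ c, ⟨sUnion_subset fun s hs => (hc hs).1,
      (pairwise_sUnion hchain.directedOn).2 fun s hs => (hc hs).2⟩,
      fun _ => subset_sUnion_of_mem⟩
  refine ⟨S, hSA, hS, fun w hwA hwS => ?_⟩
  by_contra! h
  exact hwS <| hmax ⟨insert_subset hwA hSA, hS.insert_of_symm fun x hx _ => h x hx⟩
    (subset_insert w S) (mem_insert w S)

theorem exists_subset_pairwise_min_le_dist {X : Type*} [PseudoMetricSpace X] (ρ : X → ℝ)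
    (A : Set X) :
    ∃ S ⊆ A, S.Pairwise (fun x y => min (ρ x) (ρ y) ≤ dist x y) ∧
      ∀ w ∈ A, 0 < ρ w → ∃ x ∈ S, dist w x < min (ρ w) (ρ x) := by
  have : Std.Symm fun x y => min (ρ x) (ρ y) ≤ dist x y :=
    ⟨fun x y h => by rwa [min_comm, dist_comm]⟩
  obtain ⟨S, hSA, hS, hmax⟩ :=
    exists_maximal_pairwise_subset (r := fun x y => min (ρ x) (ρ y) ≤ dist x y) A
  refine ⟨S, hSA, hS, fun w hwA hw => ?_⟩
  by_cases hwS : w ∈ S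
  · exact ⟨w, hwS, by simpa using hw⟩
  · obtain ⟨x, hxS, hwx⟩ := hmax w hwA hwS
    exact ⟨x, hxS, not_le.1 hwx⟩

theorem IsCompact.exists_encard_le_of_pairwise_le_dist {X : Type*} [PseudoMetricSpace X]
    {K : Set X} (hK : IsCompact K) {ε : ℝ} (hε : 0 < ε) :
    ∃ N : ℕ, ∀ t ⊆ K, t.Pairwise (fun x y => ε ≤ dist x y) → t.encard ≤ N := by
  set η : NNReal := (ε / 4).toNNReal
  have hη : (η : ℝ) = ε / 4 := Real.coe_toNNReal _ (by positivity)
  obtain ⟨C, -, hCfin, hC⟩ := exists_finite_isCover_of_isCompact (ε := η)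
    (Real.toNNReal_pos.2 (by positivity)).ne' hK
  refine ⟨C.ncard, fun t htK ht => ?_⟩
  have hsep : IsSeparated (2 * η : NNReal) t := ht.imp fun x y hxy => by
    rw [edist_dist, ← ENNReal.ofReal_coe_nnreal, ENNReal.ofReal_lt_ofReal_iff (by linarith),
      NNReal.coe_mul, hη]
    norm_num
    linarith
  calc t.encard ≤ packingNumber (2 * η) K := hsep.encard_le_packingNumber htK
    _ ≤ externalCoveringNumber η K := packingNumber_two_mul_le_externalCoveringNumber η K
    _ ≤ C.encard := hC.externalCoveringNumber_le_encard
    _ = C.ncard := hCfin.cast_ncard_eq.symm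

theorem exists_card_le_of_pairwise_le_dist (E : Type*) [NormedAddCommGroup E] [NormedSpace ℝ E]
    [FiniteDimensional ℝ E] (K : ℝ) :
    ∃ N : ℕ, ∀ (c : E) (δ : ℝ), 0 < δ → ∀ t : Finset E, (∀ x ∈ t, dist x c ≤ K * δ) →
      (t : Set E).Pairwise (fun x y => δ ≤ dist x y) → t.card ≤ N := by
  obtain ⟨N, hN⟩ := (isCompact_closedBall (0 : E) K).exists_encard_le_of_pairwise_le_dist one_pos
  refine ⟨N, fun c δ hδ t htc ht => ?_⟩
  set f : E → E := fun x => δ⁻¹ • (x - c)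
  have hf : ∀ x y, dist (f x) (f y) = δ⁻¹ * dist x y := fun x y => by
    simp [f, dist_smul₀, abs_of_pos hδ]
  have hfc : f c = 0 := by simp [f]
  have hinj : InjOn f t := fun x _ y _ hxy => dist_eq_zero.1 <| by
    simpa [hf, hδ.ne'] using dist_eq_zero.2 hxy
  have := hN (f '' t) (image_subset_iff.2 fun x hx => by
      rw [mem_preimage, mem_closedBall, ← hfc, hf]
      calc δ⁻¹ * dist x c ≤ δ⁻¹ * (K * δ) := by gcongr; exact htc x hx
        _ = K := by field_simp)
    ((hinj.pairwise_image).2 fun x hx y hy hxy => by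
      rw [Function.onFun, hf, ← div_eq_inv_mul, one_le_div hδ]
      exact ht hx hy hxy)
  rwa [hinj.encard_image, encard_coe_eq_coe_finsetCard, Nat.cast_le] at this

theorem IsCompact.finite_inter_of_pairwise_min_le_dist {X : Type*} [PseudoMetricSpace X]
    {ρ : X → ℝ} {S K : Set X} (hK : IsCompact K)
    (hS : S.Pairwise fun x y => min (ρ x) (ρ y) ≤ dist x y) {ε : ℝ} (hε : 0 < ε)
    (hρ : ∀ x ∈ S ∩ K, ε ≤ ρ x) : (S ∩ K).Finite := by
  obtain ⟨N, hN⟩ := hK.exists_encard_le_of_pairwise_le_dist hε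
  exact finite_of_encard_le_coe <| hN _ inter_subset_right fun x hx y hy hxy =>
    (le_min (hρ x hx) (hρ y hy)).trans (hS hx.1 hy.1 hxy)

section InvNormSeparated

variable {E : Type*} [NormedAddCommGroup E] [NormedSpace ℝ E] {S : Set E}

theorem Set.Countable.of_pairwise_min_inv_norm_le_dist [FiniteDimensional ℝ E]
    (hS : ∀ x ∈ S, 0 < ‖x‖) (hsep : S.Pairwise fun x y => min ‖x‖⁻¹ ‖y‖⁻¹ ≤ dist x y) :
    S.Countable := by
  have hfin : ∀ n : ℕ, (S ∩ closedBall 0 n).Finite := fun n =>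
    (isCompact_closedBall 0 _).finite_inter_of_pairwise_min_le_dist hsep
      (by positivity : (0 : ℝ) < ((n : ℝ) + 1)⁻¹) fun x hx =>
        inv_anti₀ (hS x hx.1) (by linarith [mem_closedBall_zero_iff.1 hx.2])
  refine (countable_iUnion fun n => (hfin n).countable).mono fun x hx => mem_iUnion.2 ?_
  exact ⟨⌈‖x‖⌉₊, hx, mem_closedBall_zero_iff.2 (Nat.le_ceil _)⟩

theorem exists_card_le_of_dist_lt_four_mul_inv_norm [FiniteDimensional ℝ E]
    (hS : ∀ x ∈ S, 4 ≤ ‖x‖)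
    (hsep : S.Pairwise fun x y => min ‖x‖⁻¹ ‖y‖⁻¹ ≤ dist x y) :
    ∃ M : ℕ, ∀ (w : E) (t : Finset E), ↑t ⊆ S → (∀ x ∈ t, dist w x < 4 * ‖x‖⁻¹) →
      t.card ≤ M := by
  obtain ⟨M, hM⟩ := exists_card_le_of_pairwise_le_dist E 6
  refine ⟨M, fun w t htS htw => ?_⟩
  have hnorm : ∀ x ∈ t, 4 ≤ ‖x‖ ∧ |‖w‖ - ‖x‖| < 1 := fun x hx => by
    have h4 := hS x (htS hx)
    refine ⟨h4, (abs_norm_sub_norm_le w x).trans_lt ?_⟩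
    rw [← dist_eq_norm]
    refine (htw x hx).trans_le ?_
    rw [← div_eq_mul_inv, div_le_one (by linarith)]
    exact h4
  refine hM w (‖w‖ + 1)⁻¹ (by positivity) t ?_ ?_
  · intro x hx
    obtain ⟨h4, hwx⟩ := hnorm x hx
    rw [dist_comm]
    refine (htw x hx).le.trans ?_
    rw [← div_eq_mul_inv, ← div_eq_mul_inv, div_le_div_iff₀ (by linarith) (by positivity)]
    linarith [(abs_lt.1 hwx).2]
  · intro x hx y hy hxy
    have hle : ∀ x ∈ t, (‖w‖ + 1)⁻¹ ≤ ‖x‖⁻¹ := fun x hx => by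
      obtain ⟨h4, hwx⟩ := hnorm x hx
      exact inv_anti₀ (by linarith) (by linarith [(abs_lt.1 hwx).1])
    exact (le_min (hle x hx) (hle y hy)).trans (hsep (htS hx) (htS hy) hxy)

theorem Set.Infinite.of_forall_exists_dist_lt [Nontrivial E] (R₀ : ℝ)
    (hS : ∀ w : E, R₀ ≤ ‖w‖ → ∃ x ∈ S, dist w x < 1) : S.Infinite := by
  intro hfin
  obtain ⟨R, hR⟩ := hfin.isBounded.subset_closedBall 0
  obtain ⟨w, hw⟩ := exists_norm_eq E (by positivity : 0 ≤ |R| + |R₀| + 1)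
  obtain ⟨x, hxS, hwx⟩ := hS w (by linarith [le_abs_self R₀, abs_nonneg R])
  have hxR := mem_closedBall_zero_iff.1 (hR hxS)
  have := norm_sub_norm_le w x
  rw [← dist_eq_norm] at this
  linarith [le_abs_self R, abs_nonneg R₀]

end InvNormSeparated

theorem exists_ball_family {E : Type*} [NormedAddCommGroup E] [NormedSpace ℝ E]
    [FiniteDimensional ℝ E] [Nontrivial E] :
    ∃ (z : ℕ → E) (r : ℕ → ℝ),
      (∀ w : E, 4 < ‖w‖ → ∃ j, w ∈ Metric.ball (z j) (r j)) ∧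
      (∀ j, 0 < r j ∧ 4 ≤ ‖z j‖ ∧ r j ≤ 1 / ‖z j‖) ∧
      (∃ M : ℕ, ∀ (w : E) (s : Finset ℕ),
        (∀ j ∈ s, w ∈ Metric.ball (z j) (4 * r j)) → s.card ≤ M) := by
  classical
  obtain ⟨S, hS, hsep, hnear⟩ :=
    exists_subset_pairwise_min_le_dist (fun x : E => ‖x‖⁻¹) {x | 4 ≤ ‖x‖}
  replace hnear : ∀ w : E, 4 ≤ ‖w‖ → ∃ x ∈ S, dist w x < min ‖w‖⁻¹ ‖x‖⁻¹ :=
    fun w hw => hnear w hw (inv_pos.2 (by linarith [show 4 ≤ ‖w‖ from hw]))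
  have : Countable S := (Set.Countable.of_pairwise_min_inv_norm_le_dist
    (fun x hx => by linarith [show 4 ≤ ‖x‖ from hS hx]) hsep).to_subtype
  have : Infinite S := Set.Infinite.to_subtype <| .of_forall_exists_dist_lt 4 fun w hw => by
    obtain ⟨x, hxS, hwx⟩ := hnear w hw
    exact ⟨x, hxS, hwx.trans_le ((min_le_left _ _).trans (inv_le_one_of_one_le₀ (by linarith)))⟩
  obtain ⟨e⟩ : Nonempty (ℕ ≃ S) := nonempty_equiv_of_countable
  obtain ⟨M, hM⟩ := exists_card_le_of_dist_lt_four_mul_inv_norm hS hsep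
  refine ⟨fun j => e j, fun j => ‖(e j : E)‖⁻¹, fun w hw => ?_, fun j => ?_, M, fun w s hs => ?_⟩
  · obtain ⟨x, hxS, hwx⟩ := hnear w hw.le
    exact ⟨e.symm ⟨x, hxS⟩, by simpa using hwx.trans_le (min_le_right _ _)⟩
  · have h4 : 4 ≤ ‖(e j : E)‖ := hS (e j).2
    exact ⟨by positivity, h4, (one_div _).ge⟩
  · have he : Function.Injective fun j => (e j : E) := Subtype.val_injective.comp e.injective
    rw [← Finset.card_image_of_injective s he]
    refine hM w _ (by simp [Set.subset_def]) fun x hx => ?_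
    obtain ⟨j, hj, rfl⟩ := Finset.mem_image.1 hx
    simpa [dist_comm] using hs j hj

/-- There is a countable family of open balls `B_j = B_{r_j}(z_j)` in `ℂ^d`
covering the complement of the closed ball of radius `4`, with `|z_j| ≥ 4`, `r_j ≤ 1/|z_j|`,
and a finite bound on the number of overlapping enlarged balls `B_{4 r_j}(z_j)`. -/
theorem ball_family_exists (d : ℕ) (hd : 1 ≤ d) :
    ∃ (z : ℕ → EuclideanSpace ℂ (Fin d)) (r : ℕ → ℝ),
      -- (1) the complement of the closed ball of radius 4 is covered
      (∀ w : EuclideanSpace ℂ (Fin d), 4 < ‖w‖ → ∃ j, w ∈ Metric.ball (z j) (r j)) ∧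
      -- (2) centers far away, radii small
      (∀ j, 0 < r j ∧ 4 ≤ ‖z j‖ ∧ r j ≤ 1 / ‖z j‖) ∧
      -- (3) bounded overlap of the enlarged balls
      (∃ M : ℕ, ∀ (w : EuclideanSpace ℂ (Fin d)) (s : Finset ℕ),
        (∀ j ∈ s, w ∈ Metric.ball (z j) (4 * r j)) → s.card ≤ M) := by
  have : Nonempty (Fin d) := ⟨⟨0, hd⟩⟩
  exact exists_ball_family
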